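/- Let U ⊆ ℝ² be open, β : U → ℝ a positive C¹ function, and γ̃ : U → M₂(ℝ) a C¹ map whose values are symmetric matrices with det γ̃(x) = 1 for all x ∈ U; set γ = βγ̃. Let u₁, u₂, u₃ be real-valued C² functions on U, set H_i := γ∇u_i, and assume det([H₁(x), H₂(x)]) ≠ 0 for all x ∈ U. Define μ₁ := det([H₃,H₂])/det([H₁,H₂]) and μ₂ := det([H₁,H₃])/det([H₁,H₂]) on U, the matrix field Z := [∇μ₁, ∇μ₂], and M := (Z [H₁,H₂]ᵀ J)^sym. Then ⟨γ̃(x), M(x)⟩ = 0 for every x ∈ U. -/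

import Mathlib

/-!
Since `Hᵢ = A ∇uᵢ` with `A = β γ̃`, and `A` is invertible because
`det [H₁, H₂] = det A · det [∇u₁, ∇u₂] ≠ 0`, the Cramer coefficients of `H₃` in the basis
`H₁, H₂` are those of `∇u₃` in the basis `∇u₁, ∇u₂`, so `∇u₃ = μ₁ ∇u₁ + μ₂ ∇u₂` and `γ`
disappears from `μ₁, μ₂`. Taking the curl of this identity, the curl-free gradients leave
`∇μ₁ × ∇u₁ + ∇μ₂ × ∇u₂ = 0`, i.e. `tr(Z Dᵀ J) = 0` for `D = [∇u₁, ∇u₂]`. On the other side,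
for symmetric `γ̃` the pairing `⟨γ̃, (Z (βγ̃D)ᵀ J)^sym⟩` equals `β tr(Z Dᵀ γ̃ J γ̃)`, and
`γ̃ J γ̃ = det γ̃ • J`.
-/

open Matrix Filter Topology

noncomputable def grad (u : (Fin 2 → ℝ) → ℝ) (x : Fin 2 → ℝ) : Fin 2 → ℝ :=
  fun i => fderiv ℝ u x (Pi.single i 1)

def col2 (a b : Fin 2 → ℝ) : Matrix (Fin 2) (Fin 2) ℝ :=
  Matrix.of fun i => ![a i, b i]

def J2 : Matrix (Fin 2) (Fin 2) ℝ := !![0, -1; 1, 0]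

noncomputable def symPart (A : Matrix (Fin 2) (Fin 2) ℝ) : Matrix (Fin 2) (Fin 2) ℝ :=
  (2 : ℝ)⁻¹ • (A + Aᵀ)

noncomputable def frob (A B : Matrix (Fin 2) (Fin 2) ℝ) : ℝ := (Aᵀ * B).trace

theorem det_col2 (a b : Fin 2 → ℝ) : (col2 a b).det = a 0 * b 1 - b 0 * a 1 := by
  simp [col2, det_fin_two]

theorem col2_mulVec (A : Matrix (Fin 2) (Fin 2) ℝ) (a b : Fin 2 → ℝ) :
    col2 (A *ᵥ a) (A *ᵥ b) = A * col2 a b := by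
  ext i j
  fin_cases j <;> simp [col2, mulVec, dotProduct, mul_apply]

noncomputable def cramer₁ (a b c : Fin 2 → ℝ) : ℝ := (col2 c b).det / (col2 a b).det

noncomputable def cramer₂ (a b c : Fin 2 → ℝ) : ℝ := (col2 a c).det / (col2 a b).det

theorem cramer₁_smul_add_cramer₂_smul {a b : Fin 2 → ℝ} (h : (col2 a b).det ≠ 0)
    (c : Fin 2 → ℝ) : cramer₁ a b c • a + cramer₂ a b c • b = c := by
  ext i
  rw [Pi.add_apply, Pi.smul_apply, Pi.smul_apply, smul_eq_mul, smul_eq_mul, cramer₁, cramer₂,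
    div_mul_eq_mul_div, div_mul_eq_mul_div, ← add_div, div_eq_iff h]
  fin_cases i <;> simp only [det_col2, Fin.zero_eta, Fin.mk_one] <;> ring

theorem cramer₁_mulVec {A : Matrix (Fin 2) (Fin 2) ℝ} (hA : A.det ≠ 0) (a b c : Fin 2 → ℝ) :
    cramer₁ (A *ᵥ a) (A *ᵥ b) (A *ᵥ c) = cramer₁ a b c := by
  simp only [cramer₁, col2_mulVec, det_mul, mul_div_mul_left _ _ hA]

theorem cramer₂_mulVec {A : Matrix (Fin 2) (Fin 2) ℝ} (hA : A.det ≠ 0) (a b c : Fin 2 → ℝ) :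
    cramer₂ (A *ᵥ a) (A *ᵥ b) (A *ᵥ c) = cramer₂ a b c := by
  simp only [cramer₂, col2_mulVec, det_mul, mul_div_mul_left _ _ hA]

theorem transpose_mul_J2_mul (A : Matrix (Fin 2) (Fin 2) ℝ) : Aᵀ * J2 * A = A.det • J2 := by
  ext i j
  fin_cases i <;> fin_cases j <;>
    simp only [J2, mul_apply, Fin.sum_univ_two, transpose_apply, of_apply, cons_val',
      cons_val_zero, cons_val_one, cons_val_fin_one, det_fin_two, Matrix.smul_apply, smul_eq_mul,
      Fin.zero_eta, Fin.mk_one] <;> ring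

theorem frob_symPart_of_isSymm {S : Matrix (Fin 2) (Fin 2) ℝ} (hS : S.IsSymm)
    (A : Matrix (Fin 2) (Fin 2) ℝ) :
    frob S (symPart A) = frob S A := by
  have h : frob S Aᵀ = frob S A := by
    simp only [frob, hS.eq]
    rw [← trace_transpose, transpose_mul, transpose_transpose, trace_mul_comm, hS.eq]
  simp only [symPart, frob, Matrix.mul_smul, Matrix.mul_add, trace_smul, trace_add] at h ⊢
  rw [h, smul_eq_mul]
  ring

theorem frob_mul_transpose_smul_mul_J2 {S : Matrix (Fin 2) (Fin 2) ℝ} (hS : S.IsSymm) (c : ℝ)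
    (Z D : Matrix (Fin 2) (Fin 2) ℝ) :
    frob S (Z * (c • S * D)ᵀ * J2) = c * S.det * (Z * Dᵀ * J2).trace := by
  calc frob S (Z * (c • S * D)ᵀ * J2) = c * (Z * Dᵀ * (Sᵀ * J2 * S)).trace := by
        rw [frob, ← trace_mul_comm]
        simp only [transpose_mul, transpose_smul, hS.eq, Matrix.mul_smul, Matrix.smul_mul,
          trace_smul, smul_eq_mul, Matrix.mul_assoc]
    _ = c * S.det * (Z * Dᵀ * J2).trace := by
        rw [transpose_mul_J2_mul, Matrix.mul_smul, trace_smul, smul_eq_mul]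
        ring

theorem trace_col2_mul_transpose_mul_J2 (z₁ z₂ d₁ d₂ : Fin 2 → ℝ) :
    (col2 z₁ z₂ * (col2 d₁ d₂)ᵀ * J2).trace
      = (z₁ 0 * d₁ 1 - z₁ 1 * d₁ 0) + (z₂ 0 * d₂ 1 - z₂ 1 * d₂ 0) := by
  simp only [col2, J2, trace_fin_two, mul_apply, Fin.sum_univ_two, transpose_apply, of_apply,
    cons_val', cons_val_zero, cons_val_one, cons_val_fin_one]
  ring

section Calculus

variable {x : Fin 2 → ℝ}

theorem Filter.EventuallyEq.grad_eq {f g : (Fin 2 → ℝ) → ℝ} (h : f =ᶠ[𝓝 x] g) :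
    grad f x = grad g x := by
  unfold grad
  rw [h.fderiv_eq]

theorem grad_mul {f g : (Fin 2 → ℝ) → ℝ} (hf : DifferentiableAt ℝ f x)
    (hg : DifferentiableAt ℝ g x) (i : Fin 2) :
    grad (fun y => f y * g y) x i = grad f x i * g x + f x * grad g x i := by
  simp only [grad, fderiv_fun_mul hf hg, _root_.add_apply, _root_.smul_apply, smul_eq_mul]
  ring

theorem grad_add {f g : (Fin 2 → ℝ) → ℝ} (hf : DifferentiableAt ℝ f x)
    (hg : DifferentiableAt ℝ g x) :
    grad (fun y => f y + g y) x = grad f x + grad g x := by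
  ext i
  simp only [grad, fderiv_fun_add hf hg, _root_.add_apply, Pi.add_apply]

theorem differentiableAt_grad {u : (Fin 2 → ℝ) → ℝ} (hu : ContDiffAt ℝ 2 u x) (i : Fin 2) :
    DifferentiableAt ℝ (fun y => grad u y i) x :=
  ((hu.fderiv_right (m := 1) (by norm_num)).differentiableAt one_ne_zero).clm_apply
    (differentiableAt_const _)

theorem grad_grad_comm {u : (Fin 2 → ℝ) → ℝ} (hu : ContDiffAt ℝ 2 u x) (i j : Fin 2) :
    grad (fun y => grad u y i) x j = grad (fun y => grad u y j) x i := by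
  have hd : DifferentiableAt ℝ (fderiv ℝ u) x :=
    (hu.fderiv_right (m := 1) (by norm_num)).differentiableAt one_ne_zero
  simp only [grad, fderiv_clm_apply hd (differentiableAt_const _), fderiv_fun_const,
    Pi.zero_apply, ContinuousLinearMap.comp_zero, zero_add, ContinuousLinearMap.flip_apply]
  exact hu.isSymmSndFDerivAt (by simp) _ _

noncomputable def curl (v : (Fin 2 → ℝ) → Fin 2 → ℝ) (x : Fin 2 → ℝ) : ℝ :=
  grad (fun y => v y 1) x 0 - grad (fun y => v y 0) x 1

theorem curl_congr {v w : (Fin 2 → ℝ) → Fin 2 → ℝ} (h : v =ᶠ[𝓝 x] w) : curl v x = curl w x := by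
  have hi (i : Fin 2) : (fun y => v y i) =ᶠ[𝓝 x] fun y => w y i := h.mono fun y hy => congrFun hy i
  rw [curl, curl, (hi 0).grad_eq, (hi 1).grad_eq]

theorem curl_grad {u : (Fin 2 → ℝ) → ℝ} (hu : ContDiffAt ℝ 2 u x) : curl (grad u) x = 0 := by
  rw [curl, grad_grad_comm hu, sub_self]

theorem curl_add {v w : (Fin 2 → ℝ) → Fin 2 → ℝ} (hv : ∀ i, DifferentiableAt ℝ (fun y => v y i) x)
    (hw : ∀ i, DifferentiableAt ℝ (fun y => w y i) x) :
    curl (fun y => v y + w y) x = curl v x + curl w x := by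
  simp only [curl, Pi.add_apply, grad_add (hv _) (hw _)]
  ring

theorem curl_smul {f : (Fin 2 → ℝ) → ℝ} {v : (Fin 2 → ℝ) → Fin 2 → ℝ}
    (hf : DifferentiableAt ℝ f x) (hv : ∀ i, DifferentiableAt ℝ (fun y => v y i) x) :
    curl (fun y => f y • v y) x = f x * curl v x + (grad f x 0 * v x 1 - grad f x 1 * v x 0) := by
  simp only [curl, Pi.smul_apply, smul_eq_mul, grad_mul hf (hv _)]
  ring

theorem DifferentiableAt.det_col2 {a b : (Fin 2 → ℝ) → Fin 2 → ℝ}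
    (ha : ∀ i, DifferentiableAt ℝ (fun y => a y i) x)
    (hb : ∀ i, DifferentiableAt ℝ (fun y => b y i) x) :
    DifferentiableAt ℝ (fun y => (col2 (a y) (b y)).det) x := by
  simp only [_root_.det_col2]
  exact ((ha 0).mul (hb 1)).sub ((hb 0).mul (ha 1))

theorem trace_col2_grad_cramer_mul_J2_eq_zero {u₁ u₂ u₃ : (Fin 2 → ℝ) → ℝ}
    (h₁ : ContDiffAt ℝ 2 u₁ x) (h₂ : ContDiffAt ℝ 2 u₂ x) (h₃ : ContDiffAt ℝ 2 u₃ x)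
    (hdet : (col2 (grad u₁ x) (grad u₂ x)).det ≠ 0) :
    (col2 (grad (fun y => cramer₁ (grad u₁ y) (grad u₂ y) (grad u₃ y)) x)
        (grad (fun y => cramer₂ (grad u₁ y) (grad u₂ y) (grad u₃ y)) x)
      * (col2 (grad u₁ x) (grad u₂ x))ᵀ * J2).trace = 0 := by
  set μ₁ := fun y => cramer₁ (grad u₁ y) (grad u₂ y) (grad u₃ y)
  set μ₂ := fun y => cramer₂ (grad u₁ y) (grad u₂ y) (grad u₃ y)
  have hg₁ := differentiableAt_grad h₁
  have hg₂ := differentiableAt_grad h₂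
  have hg₃ := differentiableAt_grad h₃
  have hD := DifferentiableAt.det_col2 hg₁ hg₂
  have hμ₁ : DifferentiableAt ℝ μ₁ x := by
    simp only [μ₁, cramer₁, div_eq_mul_inv]
    exact (DifferentiableAt.det_col2 hg₃ hg₂).mul (hD.fun_inv hdet)
  have hμ₂ : DifferentiableAt ℝ μ₂ x := by
    simp only [μ₂, cramer₂, div_eq_mul_inv]
    exact (DifferentiableAt.det_col2 hg₁ hg₃).mul (hD.fun_inv hdet)
  have hcramer : grad u₃ =ᶠ[𝓝 x] fun y => μ₁ y • grad u₁ y + μ₂ y • grad u₂ y :=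
    (hD.continuousAt.eventually_ne hdet).mono fun y hy => (cramer₁_smul_add_cramer₂_smul hy _).symm
  have hcurl := curl_congr hcramer
  have hv₁ : ∀ i, DifferentiableAt ℝ (fun y => (μ₁ y • grad u₁ y) i) x := fun i => hμ₁.mul (hg₁ i)
  have hv₂ : ∀ i, DifferentiableAt ℝ (fun y => (μ₂ y • grad u₂ y) i) x := fun i => hμ₂.mul (hg₂ i)
  rw [curl_grad h₃, curl_add hv₁ hv₂, curl_smul hμ₁ hg₁, curl_smul hμ₂ hg₂, curl_grad h₁,
    curl_grad h₂] at hcurl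
  rw [trace_col2_mul_transpose_mul_J2]
  linarith

end Calculus

theorem stmt3_general (U : Set (Fin 2 → ℝ)) (hU : IsOpen U)
    (β : (Fin 2 → ℝ) → ℝ)
    (γt : (Fin 2 → ℝ) → Matrix (Fin 2) (Fin 2) ℝ)
    (hγtsymm : ∀ x ∈ U, (γt x).IsSymm)
    (u₁ u₂ u₃ : (Fin 2 → ℝ) → ℝ)
    (hu₁ : ContDiffOn ℝ 2 u₁ U) (hu₂ : ContDiffOn ℝ 2 u₂ U) (hu₃ : ContDiffOn ℝ 2 u₃ U)
    (H₁ H₂ H₃ : (Fin 2 → ℝ) → Fin 2 → ℝ)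
    (hH₁ : ∀ x ∈ U, H₁ x = (β x • γt x).mulVec (grad u₁ x))
    (hH₂ : ∀ x ∈ U, H₂ x = (β x • γt x).mulVec (grad u₂ x))
    (hH₃ : ∀ x ∈ U, H₃ x = (β x • γt x).mulVec (grad u₃ x))
    (hdet : ∀ x ∈ U, (col2 (H₁ x) (H₂ x)).det ≠ 0) :
    ∀ x ∈ U,
      frob (γt x)
        (symPart
          (col2
            (grad (fun y => (col2 (H₃ y) (H₂ y)).det / (col2 (H₁ y) (H₂ y)).det) x)
            (grad (fun y => (col2 (H₁ y) (H₃ y)).det / (col2 (H₁ y) (H₂ y)).det) x)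
            * (col2 (H₁ x) (H₂ x))ᵀ * J2)) = 0 := by
  intro x hx
  have hG : ∀ y ∈ U, col2 (H₁ y) (H₂ y) = (β y • γt y) * col2 (grad u₁ y) (grad u₂ y) :=
    fun y hy => by rw [hH₁ y hy, hH₂ y hy, col2_mulVec]
  have hdet_mul : ∀ y ∈ U, (β y • γt y).det * (col2 (grad u₁ y) (grad u₂ y)).det ≠ 0 :=
    fun y hy => by rw [← det_mul, ← hG y hy]; exact hdet y hy
  have hμ₁ : (fun y => (col2 (H₃ y) (H₂ y)).det / (col2 (H₁ y) (H₂ y)).det)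
      =ᶠ[𝓝 x] fun y => cramer₁ (grad u₁ y) (grad u₂ y) (grad u₃ y) := by
    filter_upwards [hU.mem_nhds hx] with y hy
    rw [← cramer₁_mulVec (left_ne_zero_of_mul (hdet_mul y hy)), ← hH₁ y hy, ← hH₂ y hy, ← hH₃ y hy,
      cramer₁]
  have hμ₂ : (fun y => (col2 (H₁ y) (H₃ y)).det / (col2 (H₁ y) (H₂ y)).det)
      =ᶠ[𝓝 x] fun y => cramer₂ (grad u₁ y) (grad u₂ y) (grad u₃ y) := by
    filter_upwards [hU.mem_nhds hx] with y hy
    rw [← cramer₂_mulVec (left_ne_zero_of_mul (hdet_mul y hy)), ← hH₁ y hy, ← hH₂ y hy, ← hH₃ y hy,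
      cramer₂]
  have hcontDiffAt {u : (Fin 2 → ℝ) → ℝ} (hu : ContDiffOn ℝ 2 u U) : ContDiffAt ℝ 2 u x :=
    hu.contDiffAt (hU.mem_nhds hx)
  rw [hμ₁.grad_eq, hμ₂.grad_eq, frob_symPart_of_isSymm (hγtsymm x hx), hG x hx,
    frob_mul_transpose_smul_mul_J2 (hγtsymm x hx),
    trace_col2_grad_cramer_mul_J2_eq_zero (hcontDiffAt hu₁) (hcontDiffAt hu₂) (hcontDiffAt hu₃)
      (right_ne_zero_of_mul (hdet_mul x hx)), mul_zero]

/-- Pointwise orthogonality constraint of Section 3.2: the normalized anisotropy `γ̃` is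
Frobenius-orthogonal to the constraint matrix `M = (Z[H₁,H₂]ᵀJ)^sym` built from the internal
current densities `Hᵢ = γ∇uᵢ` via Cramer's rule coefficients `μ₁, μ₂` and `Z = [∇μ₁, ∇μ₂]`. -/
theorem stmt3 (U : Set (Fin 2 → ℝ)) (hU : IsOpen U)
    (β : (Fin 2 → ℝ) → ℝ) (hβC : ContDiffOn ℝ 1 β U) (hβpos : ∀ x ∈ U, 0 < β x)
    (γt : (Fin 2 → ℝ) → Matrix (Fin 2) (Fin 2) ℝ)
    (hγtC : ∀ i j, ContDiffOn ℝ 1 (fun x => γt x i j) U)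
    (hγtsymm : ∀ x ∈ U, (γt x).IsSymm) (hγtdet : ∀ x ∈ U, (γt x).det = 1)
    (u₁ u₂ u₃ : (Fin 2 → ℝ) → ℝ)
    (hu₁ : ContDiffOn ℝ 2 u₁ U) (hu₂ : ContDiffOn ℝ 2 u₂ U) (hu₃ : ContDiffOn ℝ 2 u₃ U)
    (H₁ H₂ H₃ : (Fin 2 → ℝ) → Fin 2 → ℝ)
    (hH₁ : ∀ x ∈ U, H₁ x = (β x • γt x).mulVec (grad u₁ x))
    (hH₂ : ∀ x ∈ U, H₂ x = (β x • γt x).mulVec (grad u₂ x))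
    (hH₃ : ∀ x ∈ U, H₃ x = (β x • γt x).mulVec (grad u₃ x))
    (hdet : ∀ x ∈ U, (col2 (H₁ x) (H₂ x)).det ≠ 0) :
    ∀ x ∈ U,
      frob (γt x)
        (symPart
          (col2
            (grad (fun y => (col2 (H₃ y) (H₂ y)).det / (col2 (H₁ y) (H₂ y)).det) x)
            (grad (fun y => (col2 (H₁ y) (H₃ y)).det / (col2 (H₁ y) (H₂ y)).det) x)
            * (col2 (H₁ x) (H₂ x))ᵀ * J2)) = 0 :=
  stmt3_general U hU β γt hγtsymm u₁ u₂ u₃ hu₁ hu₂ hu₃ H₁ H₂ H₃ hH₁ hH₂ hH₃ hdet
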